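/- arXiv:1108.6081 — 4 statements merged into one kernel-verified Lean document; each statement's English description precedes it below -/
import Mathlib

section
/- Let $0<\alpha<1$ and let $E\subseteq\mathbb{R}$ be a measurable set with finite positive measure. Then for the kernel decomposition over dyadic scale $k\in\mathbb{Z}$ and any partition of $\mathbb{R}$ into intervals $\{I_j^k\}_j$ of length $2^k$, and any $0<\gamma<\min(\alpha,1-\alpha)$, the following holds: if $2^n\le |E| < 2^{n+1}$ and $k\le n$, then $\sum_j 2^{-k\alpha}|E\cap I_j^k|^2 \leq C\,|E|^{2-\alpha}\,2^{-(n-k)(1-\alpha-\gamma)}\left(\sup_j \frac{|E\cap I_j^k|}{|E|+|I_j^k|}\right)^{\gamma}$ for a constant $C$ depending only on $\alpha$ and $\gamma$. -/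
open MeasureTheory Set

/-- The dyadic-scale estimate for `∑_j 2^{-kα} |E ∩ I_j^k|²` in the case `k ≤ n`,
where `2^n ≤ |E| < 2^{n+1}` and `{I_j}` is a partition of ℝ into intervals of
length `2^k`. -/
theorem stmt_7 (α γ : ℝ) (hα0 : 0 < α) (hα1 : α < 1)
    (hγ0 : 0 < γ) (hγ : γ < min α (1 - α)) :
    ∃ C : ℝ, 0 < C ∧
      ∀ (E : Set ℝ), MeasurableSet E → 0 < volume E → volume E < ⊤ →
      ∀ (n k : ℤ),
        ENNReal.ofReal ((2 : ℝ) ^ n) ≤ volume E →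
        volume E < ENNReal.ofReal ((2 : ℝ) ^ (n + 1)) →
        k ≤ n →
      ∀ (I : ℤ → Set ℝ),
        (∀ j, ∃ a : ℝ, I j = Set.Ico a (a + (2 : ℝ) ^ k)) →
        Pairwise (Function.onFun Disjoint I) →
        (⋃ j, I j) = Set.univ →
        ∑' j : ℤ, (2 : ℝ) ^ (-(k : ℝ) * α) * ((volume (E ∩ I j)).toReal) ^ 2 ≤
          C * (volume E).toReal ^ (2 - α)
            * (2 : ℝ) ^ (-((n : ℝ) - (k : ℝ)) * (1 - α - γ))
            * (⨆ j : ℤ,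
                (volume (E ∩ I j)).toReal
                  / ((volume E).toReal + (volume (I j)).toReal)) ^ γ := by
  refine ⟨2, by norm_num, ?_⟩
  intro E hEmeas hE0 hEfin n k hEn hEn' hkn I hI hdisj hcover
  have hγ1 : γ < 1 - α := lt_of_lt_of_le hγ (min_le_right _ _)
  set m : ℤ → ℝ := fun j => (volume (E ∩ I j)).toReal with hm
  have h2k : (0:ℝ) < 2 ^ k := by positivity
  have hIvol : ∀ j, volume (I j) = ENNReal.ofReal ((2:ℝ)^k) := by
    intro j; obtain ⟨a, ha⟩ := hI j
    rw [ha, Real.volume_Ico, add_sub_cancel_left]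
  have hIvolR : ∀ j, (volume (I j)).toReal = (2:ℝ)^k := by
    intro j; rw [hIvol j, ENNReal.toReal_ofReal h2k.le]
  have hImeas : ∀ j, MeasurableSet (I j) := by
    intro j; obtain ⟨a, ha⟩ := hI j; rw [ha]; exact measurableSet_Ico
  have hEeq : ∑' j, volume (E ∩ I j) = volume E := by
    rw [← measure_iUnion
      (fun i j h => ((hdisj h).mono inter_subset_right inter_subset_right))
      (fun j => hEmeas.inter (hImeas j)), ← inter_iUnion, hcover, inter_univ]
  have hmtop : ∀ j, volume (E ∩ I j) ≠ ⊤ :=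
    fun j => ((measure_mono inter_subset_left).trans_lt hEfin).ne
  have hsum : Summable m := ENNReal.summable_toReal (by rw [hEeq]; exact hEfin.ne)
  set eE : ℝ := (volume E).toReal with heE
  have heE0 : 0 < eE := ENNReal.toReal_pos hE0.ne' hEfin.ne
  have hmsum : ∑' j, m j = eE := by
    rw [heE, ← hEeq, ENNReal.tsum_toReal_eq hmtop]
  have hm0 : ∀ j, 0 ≤ m j := fun j => ENNReal.toReal_nonneg
  have hmk : ∀ j, m j ≤ (2:ℝ)^k := by
    intro j
    calc m j ≤ (volume (I j)).toReal :=
          ENNReal.toReal_mono (by rw [hIvol]; exact ENNReal.ofReal_ne_top)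
            (measure_mono inter_subset_right)
      _ = (2:ℝ)^k := hIvolR j
  have h2n : (2:ℝ)^n ≤ eE := by
    have := ENNReal.toReal_mono hEfin.ne hEn
    rwa [ENNReal.toReal_ofReal (by positivity)] at this
  have hkn' : (2:ℝ)^k ≤ eE :=
    le_trans (zpow_le_zpow_right₀ (by norm_num) hkn) h2n
  set S : ℝ := ⨆ j, m j / (eE + (volume (I j)).toReal) with hS
  have hterm : ∀ j, m j / (eE + (volume (I j)).toReal) = m j / (eE + 2^k) := by
    intro j; rw [hIvolR]
  have hbdd : BddAbove (range fun j => m j / (eE + (volume (I j)).toReal)) := by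
    refine ⟨1, ?_⟩; rintro x ⟨j, rfl⟩
    show m j / (eE + (volume (I j)).toReal) ≤ 1
    rw [hterm]
    exact div_le_one_of_le₀ ((hmk j).trans (by linarith)) (by positivity)
  have hS0 : 0 ≤ S := by
    refine le_trans ?_ (le_ciSup hbdd 0)
    rw [hterm]; positivity
  have hmS2 : ∀ j, m j ≤ 2 * S * eE := by
    intro j
    have h1 : m j / (eE + 2^k) ≤ S := by rw [← hterm j]; exact le_ciSup hbdd j
    have h2 : (0:ℝ) < eE + 2^k := by positivity
    have h3 : m j ≤ S * (eE + 2^k) := by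
      rw [div_le_iff₀ h2] at h1; linarith
    nlinarith
  set B : ℝ := (2*S*eE)^γ * ((2:ℝ)^k)^(1-γ) with hB
  have hmB : ∀ j, m j ≤ B := by
    intro j
    have hmj : m j = (m j)^γ * (m j)^(1-γ) := by
      have h := Real.rpow_add' (hm0 j) (y := γ) (z := 1-γ) (by norm_num)
      rw [show γ + (1-γ) = 1 by ring, Real.rpow_one] at h
      exact h
    rw [hmj, hB]
    exact mul_le_mul (Real.rpow_le_rpow (hm0 j) (hmS2 j) hγ0.le)
      (Real.rpow_le_rpow (hm0 j) (hmk j) (by linarith))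
      (Real.rpow_nonneg (hm0 j) _) (Real.rpow_nonneg (by positivity) _)
  have hB0 : 0 ≤ B := by
    rw [hB]; positivity
  have key : ∑' j, (2:ℝ)^(-(k:ℝ)*α) * (m j)^2 ≤ (2:ℝ)^(-(k:ℝ)*α) * B * eE := by
    have h1 : ∀ j, (2:ℝ)^(-(k:ℝ)*α) * (m j)^2 ≤ (2:ℝ)^(-(k:ℝ)*α) * B * m j := by
      intro j
      have h2 : (m j)^2 ≤ B * m j := by
        rw [sq]; exact mul_le_mul_of_nonneg_right (hmB j) (hm0 j)
      calc (2:ℝ)^(-(k:ℝ)*α) * (m j)^2 ≤ (2:ℝ)^(-(k:ℝ)*α) * (B * m j) :=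
            mul_le_mul_of_nonneg_left h2 (by positivity)
        _ = (2:ℝ)^(-(k:ℝ)*α) * B * m j := by ring
    have hsum2 : Summable (fun j => (2:ℝ)^(-(k:ℝ)*α) * B * m j) := hsum.mul_left _
    have hsum1 : Summable (fun j => (2:ℝ)^(-(k:ℝ)*α) * (m j)^2) :=
      Summable.of_nonneg_of_le (fun j => by positivity) h1 hsum2
    calc ∑' j, (2:ℝ)^(-(k:ℝ)*α) * (m j)^2 ≤ ∑' j, (2:ℝ)^(-(k:ℝ)*α) * B * m j :=
          Summable.tsum_le_tsum h1 hsum1 hsum2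
      _ = (2:ℝ)^(-(k:ℝ)*α) * B * (∑' j, m j) := tsum_mul_left
      _ = (2:ℝ)^(-(k:ℝ)*α) * B * eE := by rw [hmsum]
  refine key.trans ?_
  -- now pure real-number computation
  have hkr : ((2:ℝ)^k : ℝ) = (2:ℝ)^((k:ℝ)) := (Real.rpow_intCast 2 k).symm
  have hnr : ((2:ℝ)^n : ℝ) = (2:ℝ)^((n:ℝ)) := (Real.rpow_intCast 2 n).symm
  have hBexp : B = (2*S*eE)^γ * (2:ℝ)^((k:ℝ)*(1-γ)) := by
    rw [hB, hkr, ← Real.rpow_mul (by norm_num : (0:ℝ) ≤ 2)]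
  have hmulr : (2*S*eE)^γ = 2^γ * S^γ * eE^γ := by
    rw [Real.mul_rpow (by positivity) heE0.le, Real.mul_rpow (by norm_num) hS0]
  have heE1 : eE^γ * eE = eE^(2-α) * eE^(α+γ-1) := by
    have h : eE^(2-α) * eE^(α+γ-1) = eE^γ * eE := by
      rw [← Real.rpow_add heE0, show (2-α) + (α+γ-1) = γ + 1 by ring,
        Real.rpow_add heE0, Real.rpow_one]
    exact h.symm
  have heE2 : eE^(α+γ-1) ≤ ((2:ℝ)^((n:ℝ)))^(α+γ-1) := by
    refine Real.rpow_le_rpow_of_nonpos (by positivity) ?_ (by linarith)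
    rw [← hnr]; exact h2n
  have hexp2 : ((2:ℝ)^((n:ℝ)))^(α+γ-1) = (2:ℝ)^((n:ℝ)*(α+γ-1)) := by
    rw [← Real.rpow_mul (by norm_num)]
  have hfin : (2:ℝ)^(-(k:ℝ)*α) * (2^γ * S^γ * (2:ℝ)^((n:ℝ)*(α+γ-1))) *
      (2:ℝ)^((k:ℝ)*(1-γ)) * eE^(2-α)
      ≤ 2 * eE ^ (2 - α) * (2:ℝ)^(-((n:ℝ)-(k:ℝ))*(1-α-γ)) * S^γ := by
    have hpow : (2:ℝ)^(-(k:ℝ)*α) * 2^γ * (2:ℝ)^((n:ℝ)*(α+γ-1)) * (2:ℝ)^((k:ℝ)*(1-γ))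
        ≤ 2 * (2:ℝ)^(-((n:ℝ)-(k:ℝ))*(1-α-γ)) := by
      rw [← Real.rpow_add (by norm_num : (0:ℝ) < 2), ← Real.rpow_add (by norm_num : (0:ℝ) < 2),
        ← Real.rpow_add (by norm_num : (0:ℝ) < 2)]
      calc (2:ℝ)^(-(k:ℝ)*α + γ + (n:ℝ)*(α+γ-1) + (k:ℝ)*(1-γ))
          ≤ (2:ℝ)^(1 + -((n:ℝ)-(k:ℝ))*(1-α-γ)) := by
            refine Real.rpow_le_rpow_of_exponent_le one_le_two ?_
            have heq : -(k:ℝ)*α + γ + (n:ℝ)*(α+γ-1) + (k:ℝ)*(1-γ)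
                = (1 + -((n:ℝ)-(k:ℝ))*(1-α-γ)) + (γ - 1) := by ring
            rw [heq]; linarith
        _ = 2 * (2:ℝ)^(-((n:ℝ)-(k:ℝ))*(1-α-γ)) := by
            rw [Real.rpow_add (by norm_num : (0:ℝ) < 2), Real.rpow_one]
    calc (2:ℝ)^(-(k:ℝ)*α) * (2^γ * S^γ * (2:ℝ)^((n:ℝ)*(α+γ-1))) *
        (2:ℝ)^((k:ℝ)*(1-γ)) * eE^(2-α)
        = ((2:ℝ)^(-(k:ℝ)*α) * 2^γ * (2:ℝ)^((n:ℝ)*(α+γ-1)) * (2:ℝ)^((k:ℝ)*(1-γ)))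
          * (eE^(2-α) * S^γ) := by ring
      _ ≤ (2 * (2:ℝ)^(-((n:ℝ)-(k:ℝ))*(1-α-γ))) * (eE^(2-α) * S^γ) := by
          refine mul_le_mul_of_nonneg_right hpow ?_
          exact mul_nonneg (Real.rpow_nonneg heE0.le _) (Real.rpow_nonneg hS0 _)
      _ = 2 * eE ^ (2 - α) * (2:ℝ)^(-((n:ℝ)-(k:ℝ))*(1-α-γ)) * S^γ := by ring
  calc (2:ℝ)^(-(k:ℝ)*α) * B * eE
      = (2:ℝ)^(-(k:ℝ)*α) * (2^γ * S^γ * (eE^γ * eE)) * (2:ℝ)^((k:ℝ)*(1-γ)) := by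
        rw [hBexp, hmulr]; ring
    _ = (2:ℝ)^(-(k:ℝ)*α) * (2^γ * S^γ * eE^(α+γ-1)) * (2:ℝ)^((k:ℝ)*(1-γ)) * eE^(2-α) := by
        rw [heE1]; ring
    _ ≤ (2:ℝ)^(-(k:ℝ)*α) * (2^γ * S^γ * ((2:ℝ)^((n:ℝ)))^(α+γ-1)) * (2:ℝ)^((k:ℝ)*(1-γ)) * eE^(2-α) := by
        have hnn : (0:ℝ) ≤ (2:ℝ)^(-(k:ℝ)*α) * (2^γ * S^γ) * (2:ℝ)^((k:ℝ)*(1-γ)) * eE^(2-α) := by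
          positivity
        nlinarith [heE2, Real.rpow_nonneg (le_of_lt (by positivity : (0:ℝ) < (2:ℝ)^((n:ℝ)))) (α+γ-1)]
    _ ≤ 2 * eE ^ (2 - α) * (2:ℝ)^(-((n:ℝ)-(k:ℝ))*(1-α-γ)) * S^γ := by
        rw [hexp2] at *; exact hfin
end

section
/- Let $0<\alpha<1$ and $p=2/(2-\alpha)$. There exist $C<\infty$ and $\gamma\in(0,1)$ such that for every measurable set $E\subseteq\mathbb{R}$ of finite measure, $\int_{\mathbb{R}}\int_{\mathbb{R}}\frac{\chi_E(x)\chi_E(y)}{|x-y|^{\alpha}}\,dx\,dy \leq C\,|E|^{2/p}\left(\sup_{I}\frac{|E\cap I|}{|E|+|I|}\right)^{\gamma}$, where the supremum ranges over all compact intervals $I\subseteq\mathbb{R}$. -/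
/-!
Let `m = |E|` and let `D` be the maximal interval density, so that `|E ∩ I| ≤ D (m + |I|)` for
every interval `I`, and `0 < D ≤ 1` when `m > 0`. For fixed `x`, split `E` at the distances
`a = m √D` and `T = m / √D` from `x`: the points within `a` of `x` contribute at most
`∫_{|t| ≤ a} |t|^{-α} ≍ a^{1-α}`, those between `a` and `T` at most
`a^{-α} |E ∩ [x - T, x + T]| ≤ a^{-α} D (m + 2T)`, and the rest at most `T^{-α} m`. These are
`m^{1-α}` times `D^{(1-α)/2}`, `D^{1-α/2}` and `D^{α/2}`, all at most `m^{1-α} D^γ` for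
`γ = min(α, 1-α)/2`. Integrating over `x ∈ E` gives `m^{2-α} D^γ = m^{2/p} D^γ`.
-/

open MeasureTheory Set ENNReal

noncomputable def intervalDensity (E : Set ℝ) (q : ℝ × ℝ) : ℝ :=
  (volume (E ∩ Icc q.1 q.2)).toReal / ((volume E).toReal + (volume (Icc q.1 q.2)).toReal)

noncomputable def maxIntervalDensity (E : Set ℝ) : ℝ :=
  ⨆ q : ℝ × ℝ, intervalDensity E q

section IntervalDensity

variable {E : Set ℝ}

lemma intervalDensity_nonneg (q : ℝ × ℝ) : 0 ≤ intervalDensity E q := by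
  unfold intervalDensity; positivity

lemma intervalDensity_le_one (q : ℝ × ℝ) : intervalDensity E q ≤ 1 := by
  refine div_le_one_of_le₀ ?_ (by positivity)
  calc (volume (E ∩ Icc q.1 q.2)).toReal ≤ (volume (Icc q.1 q.2)).toReal :=
        ENNReal.toReal_mono measure_Icc_lt_top.ne (measure_mono inter_subset_right)
    _ ≤ _ := le_add_of_nonneg_left ENNReal.toReal_nonneg

lemma intervalDensity_le_maxIntervalDensity (q : ℝ × ℝ) :
    intervalDensity E q ≤ maxIntervalDensity E :=
  le_ciSup ⟨1, by rintro _ ⟨q, rfl⟩; exact intervalDensity_le_one q⟩ q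

lemma maxIntervalDensity_nonneg : 0 ≤ maxIntervalDensity E :=
  Real.iSup_nonneg intervalDensity_nonneg

lemma maxIntervalDensity_le_one : maxIntervalDensity E ≤ 1 :=
  ciSup_le intervalDensity_le_one

lemma maxIntervalDensity_pos (hE : volume E ≠ 0) : 0 < maxIntervalDensity E := by
  obtain ⟨n, hn⟩ : ∃ n : ℕ, volume (E ∩ Icc (-n : ℝ) n) ≠ 0 := by
    by_contra! h
    apply hE
    rw [← inter_univ E, ← Metric.iUnion_closedBall_nat (0 : ℝ), inter_iUnion]
    exact measure_iUnion_null fun n => by rw [Real.closedBall_eq_Icc, zero_sub, zero_add]; exact h n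
  have hI : volume (E ∩ Icc (-n : ℝ) n) ≤ volume (Icc (-n : ℝ) n) :=
    measure_mono inter_subset_right
  have hnum : 0 < (volume (E ∩ Icc (-n : ℝ) n)).toReal :=
    ENNReal.toReal_pos hn (hI.trans_lt measure_Icc_lt_top).ne
  refine (div_pos hnum ?_).trans_le (intervalDensity_le_maxIntervalDensity (-n, n))
  exact add_pos_of_nonneg_of_pos ENNReal.toReal_nonneg
    (hnum.trans_le (ENNReal.toReal_mono measure_Icc_lt_top.ne hI))

lemma measure_inter_Icc_le_maxIntervalDensity (hE : volume E ≠ ⊤) {a b : ℝ} (hab : a < b) :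
    volume (E ∩ Icc a b) ≤
      ENNReal.ofReal (maxIntervalDensity E * ((volume E).toReal + (b - a))) := by
  have h := intervalDensity_le_maxIntervalDensity (E := E) (a, b)
  rw [intervalDensity, Real.volume_Icc, ENNReal.toReal_ofReal (sub_nonneg.2 hab.le),
    div_le_iff₀ (by have := sub_pos.2 hab; positivity)] at h
  rw [← ENNReal.ofReal_toReal ((measure_mono inter_subset_left).trans_lt hE.lt_top).ne]
  exact ENNReal.ofReal_le_ofReal h

end IntervalDensity

section RieszKernel

variable {α : ℝ}

lemma lintegral_Icc_zero_abs_rpow_neg (hα : α < 1) {a : ℝ} (ha : 0 ≤ a) :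
    ∫⁻ t in Icc 0 a, ENNReal.ofReal (|t| ^ (-α)) = ENNReal.ofReal (a ^ (1 - α) / (1 - α)) := by
  rw [Measure.restrict_congr_set Ioc_ae_eq_Icc.symm,
    setLIntegral_congr_fun measurableSet_Ioc fun t ht => by rw [abs_of_pos ht.1],
    ← ofReal_integral_eq_lintegral_ofReal
      (intervalIntegral.intervalIntegrable_rpow' (by linarith)).1
      ((ae_restrict_iff' measurableSet_Ioc).2 (ae_of_all _ fun t ht => Real.rpow_nonneg ht.1.le _)),
    ← intervalIntegral.integral_of_le ha, integral_rpow (Or.inl (by linarith)),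
    Real.zero_rpow (by linarith), neg_add_eq_sub, sub_zero]

lemma lintegral_Icc_abs_sub_rpow_neg (hα : α < 1) (c : ℝ) {a : ℝ} (ha : 0 ≤ a) :
    ∫⁻ y in Icc (c - a) (c + a), ENNReal.ofReal (|c - y| ^ (-α)) ≤
      2 * ENNReal.ofReal (a ^ (1 - α) / (1 - α)) := by
  -- Each half of the interval is a translate of `[0, a]`, up to a reflection.
  set k : ℝ → ℝ≥0∞ := (Icc 0 a).indicator fun t => ENNReal.ofReal (|t| ^ (-α)) with hk_def
  have hk : Measurable k := by fun_prop (disch := exact measurableSet_Icc)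
  have hsplit : ∀ y ∈ Icc (c - a) (c + a),
      ENNReal.ofReal (|c - y| ^ (-α)) ≤ k (c - y) + k (y - c) := by
    rintro y ⟨hy₁, hy₂⟩
    rcases le_total y c with h | h
    · refine le_add_right (le_of_eq ?_)
      rw [hk_def, indicator_of_mem (show c - y ∈ Icc 0 a from ⟨by linarith, by linarith⟩)]
    · refine le_add_left (le_of_eq ?_)
      rw [hk_def, indicator_of_mem (show y - c ∈ Icc 0 a from ⟨by linarith, by linarith⟩),
        abs_sub_comm]
  calc ∫⁻ y in Icc (c - a) (c + a), ENNReal.ofReal (|c - y| ^ (-α))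
      ≤ ∫⁻ y, k (c - y) + k (y - c) :=
        (setLIntegral_mono' measurableSet_Icc hsplit).trans (setLIntegral_le_lintegral _ _)
    _ = 2 * ∫⁻ t, k t := by
        rw [lintegral_add_left (by fun_prop), lintegral_sub_left_eq_self,
          lintegral_sub_right_eq_self, two_mul]
    _ = 2 * ENNReal.ofReal (a ^ (1 - α) / (1 - α)) := by
        rw [lintegral_indicator measurableSet_Icc, lintegral_Icc_zero_abs_rpow_neg hα ha]


lemma setLIntegral_diff_Icc_abs_sub_rpow_neg_le (hα : 0 ≤ α) {F : Set ℝ} (hF : MeasurableSet F)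
    (x : ℝ) {r : ℝ} (hr : 0 < r) :
    ∫⁻ y in F \ Icc (x - r) (x + r), ENNReal.ofReal (|x - y| ^ (-α)) ≤
      ENNReal.ofReal (r ^ (-α)) * volume F := by
  calc ∫⁻ y in F \ Icc (x - r) (x + r), ENNReal.ofReal (|x - y| ^ (-α))
      ≤ ∫⁻ _ in F \ Icc (x - r) (x + r), ENNReal.ofReal (r ^ (-α)) := by
        refine setLIntegral_mono' (hF.diff measurableSet_Icc) fun y hy => ?_
        have hry : r ≤ |x - y| := by
          have := hy.2
          rw [mem_Icc, not_and_or, not_le, not_le] at this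
          exact le_abs.2 (this.imp (fun h => by linarith) fun h => by linarith)
        exact ENNReal.ofReal_le_ofReal (Real.rpow_le_rpow_of_nonpos hr hry (neg_nonpos.2 hα))
    _ ≤ ENNReal.ofReal (r ^ (-α)) * volume F := by
        rw [setLIntegral_const]; gcongr; exact sdiff_subset

lemma lintegral_abs_sub_rpow_neg_le_three_scales (hα₀ : 0 ≤ α) (hα₁ : α < 1) {E : Set ℝ}
    (hE : MeasurableSet E) (x : ℝ) {a T : ℝ} (ha : 0 < a) (hT : 0 < T) :
    ∫⁻ y in E, ENNReal.ofReal (|x - y| ^ (-α)) ≤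
      2 * ENNReal.ofReal (a ^ (1 - α) / (1 - α))
        + ENNReal.ofReal (a ^ (-α)) * volume (E ∩ Icc (x - T) (x + T))
        + ENNReal.ofReal (T ^ (-α)) * volume E := by
  have hcover : E ⊆ (Icc (x - a) (x + a) ∪ (E ∩ Icc (x - T) (x + T)) \ Icc (x - a) (x + a))
      ∪ E \ Icc (x - T) (x + T) := by
    intro y hy
    by_cases hya : y ∈ Icc (x - a) (x + a)
    · exact Or.inl (Or.inl hya)
    by_cases hyT : y ∈ Icc (x - T) (x + T)
    · exact Or.inl (Or.inr ⟨⟨hy, hyT⟩, hya⟩)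
    · exact Or.inr ⟨hy, hyT⟩
  refine (lintegral_mono_set hcover).trans <| (lintegral_union_le _ _ _).trans <|
    add_le_add ((lintegral_union_le _ _ _).trans (add_le_add ?_ ?_)) ?_
  · exact lintegral_Icc_abs_sub_rpow_neg hα₁ x ha.le
  · exact setLIntegral_diff_Icc_abs_sub_rpow_neg_le hα₀ (hE.inter measurableSet_Icc) x ha
  · exact setLIntegral_diff_Icc_abs_sub_rpow_neg_le hα₀ hE x hT

end RieszKernel

lemma three_scale_sum_le {α m s : ℝ} (hα₁ : α < 1) (hm : 0 < m) (hs₀ : 0 < s)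
    (hs₁ : s ≤ 1) :
    2 * ((m * s) ^ (1 - α) / (1 - α)) + (m * s) ^ (-α) * (s ^ 2 * (m + 2 * (m / s)))
        + (m / s) ^ (-α) * m
      ≤ (2 / (1 - α) + 4) * m ^ (1 - α) * s ^ min α (1 - α) := by
  have hα : 0 < 1 - α := by linarith
  have hm' : m ^ (-α) = m ^ (1 - α) / m := by rw [← Real.rpow_sub_one hm.ne']; ring_nf
  have hs' : s ^ (-α) = s ^ (1 - α) / s := by rw [← Real.rpow_sub_one hs₀.ne']; ring_nf
  have huv : s ^ (1 - α) * s ^ α = s := by rw [← Real.rpow_add hs₀]; simp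
  have hu : s ^ (1 - α) ≤ s ^ min α (1 - α) :=
    Real.rpow_le_rpow_of_exponent_ge hs₀ hs₁ (min_le_right _ _)
  have hv : s ^ α ≤ s ^ min α (1 - α) :=
    Real.rpow_le_rpow_of_exponent_ge hs₀ hs₁ (min_le_left _ _)
  calc _ = m ^ (1 - α) * (2 / (1 - α) * s ^ (1 - α) + (s + 2) * s ^ (1 - α) + s ^ α) := by
        rw [Real.mul_rpow hm.le hs₀.le, Real.mul_rpow hm.le hs₀.le, Real.div_rpow hm.le hs₀.le,
          hm', hs']
        field_simp
        linear_combination (α - 1) * huv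
    _ ≤ m ^ (1 - α) * (2 / (1 - α) * s ^ min α (1 - α) + (1 + 2) * s ^ min α (1 - α)
          + s ^ min α (1 - α)) := by gcongr
    _ = _ := by ring

lemma lintegral_abs_sub_rpow_neg_le_maxIntervalDensity {α : ℝ} (hα₀ : 0 ≤ α) (hα₁ : α < 1)
    {E : Set ℝ} (hE : MeasurableSet E) (hE₀ : volume E ≠ 0) (hE₁ : volume E ≠ ⊤) (x : ℝ) :
    ∫⁻ y in E, ENNReal.ofReal (|x - y| ^ (-α)) ≤
      ENNReal.ofReal ((2 / (1 - α) + 4) * (volume E).toReal ^ (1 - α)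
        * maxIntervalDensity E ^ (min α (1 - α) / 2)) := by
  set m := (volume E).toReal
  set s := √(maxIntervalDensity E) with hs_def
  have hm : 0 < m := ENNReal.toReal_pos hE₀ hE₁
  have hs₀ : 0 < s := Real.sqrt_pos.2 (maxIntervalDensity_pos hE₀)
  have hs₁ : s ≤ 1 := Real.sqrt_le_one.2 maxIntervalDensity_le_one
  have hmid : volume (E ∩ Icc (x - m / s) (x + m / s)) ≤
      ENNReal.ofReal (s ^ 2 * (m + 2 * (m / s))) := by
    have hT : x - m / s < x + m / s := by linarith [show 0 < m / s by positivity]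
    convert measure_inter_Icc_le_maxIntervalDensity hE₁ hT using 3
    · exact Real.sq_sqrt maxIntervalDensity_nonneg
    · ring
  calc ∫⁻ y in E, ENNReal.ofReal (|x - y| ^ (-α))
      ≤ 2 * ENNReal.ofReal ((m * s) ^ (1 - α) / (1 - α))
        + ENNReal.ofReal ((m * s) ^ (-α)) * volume (E ∩ Icc (x - m / s) (x + m / s))
        + ENNReal.ofReal ((m / s) ^ (-α)) * volume E :=
        lintegral_abs_sub_rpow_neg_le_three_scales hα₀ hα₁ hE x (by positivity) (by positivity)
    _ ≤ 2 * ENNReal.ofReal ((m * s) ^ (1 - α) / (1 - α))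
        + ENNReal.ofReal ((m * s) ^ (-α)) * ENNReal.ofReal (s ^ 2 * (m + 2 * (m / s)))
        + ENNReal.ofReal ((m / s) ^ (-α)) * ENNReal.ofReal m := by
        rw [ENNReal.ofReal_toReal hE₁]; gcongr
    _ = ENNReal.ofReal (2 * ((m * s) ^ (1 - α) / (1 - α))
        + (m * s) ^ (-α) * (s ^ 2 * (m + 2 * (m / s))) + (m / s) ^ (-α) * m) := by
        have : 0 < 1 - α := by linarith
        rw [ENNReal.ofReal_add, ENNReal.ofReal_add, ENNReal.ofReal_mul (p := 2),
          ENNReal.ofReal_mul (p := (m * s) ^ (-α)), ENNReal.ofReal_mul (p := (m / s) ^ (-α)),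
          ENNReal.ofReal_ofNat]
        all_goals positivity
    _ ≤ _ := by
        refine ENNReal.ofReal_le_ofReal ((three_scale_sum_le hα₁ hm hs₀ hs₁).trans_eq ?_)
        rw [hs_def, Real.sqrt_eq_rpow, ← Real.rpow_mul maxIntervalDensity_nonneg]
        ring_nf

/-- Cap-type refinement for `B(χ_E, χ_E)`: there are `C < ∞` and `γ ∈ (0,1)`
such that the double integral of `|x-y|^{-α}` over `E × E` is controlled by
`|E|^{2/p}` times a power of the maximal density of `E` on intervals. -/
theorem stmt_8 (α p : ℝ) (hα0 : 0 < α) (hα1 : α < 1) (hp : p = 2 / (2 - α)) :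
    ∃ (C : ℝ) (γ : ℝ), 0 < C ∧ γ ∈ Set.Ioo (0 : ℝ) 1 ∧
      ∀ E : Set ℝ, MeasurableSet E → volume E < ⊤ →
        ∫⁻ x in E, ∫⁻ y in E, ENNReal.ofReal (|x - y| ^ (-α)) ≤
          ENNReal.ofReal (C * (volume E).toReal ^ (2 / p) *
            (⨆ q : ℝ × ℝ,
              (volume (E ∩ Icc q.1 q.2)).toReal
                / ((volume E).toReal + (volume (Icc q.1 q.2)).toReal)) ^ γ) := by
  have hα : 0 < 1 - α := by linarith
  refine ⟨2 / (1 - α) + 4, min α (1 - α) / 2, by positivity,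
    ⟨by positivity, by linarith [min_le_left α (1 - α)]⟩, fun E hE hE₁ => ?_⟩
  rcases eq_or_ne (volume E) 0 with hE₀ | hE₀
  · simp [Measure.restrict_eq_zero.2 hE₀]
  have hm : 0 < (volume E).toReal := ENNReal.toReal_pos hE₀ hE₁.ne
  calc ∫⁻ x in E, ∫⁻ y in E, ENNReal.ofReal (|x - y| ^ (-α))
      ≤ ∫⁻ _ in E, ENNReal.ofReal ((2 / (1 - α) + 4) * (volume E).toReal ^ (1 - α)
          * maxIntervalDensity E ^ (min α (1 - α) / 2)) :=
        lintegral_mono fun x =>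
          lintegral_abs_sub_rpow_neg_le_maxIntervalDensity hα0.le hα1 hE hE₀ hE₁.ne x
    _ = ENNReal.ofReal ((2 / (1 - α) + 4) * (volume E).toReal ^ (1 - α)
          * maxIntervalDensity E ^ (min α (1 - α) / 2) * (volume E).toReal) := by
        have := maxIntervalDensity_nonneg (E := E)
        rw [setLIntegral_const, ENNReal.ofReal_mul (q := (volume E).toReal) (by positivity),
          ENNReal.ofReal_toReal hE₁.ne]
    _ = _ := by
        rw [hp, show 2 / (2 / (2 - α)) = (1 - α) + 1 by field_simp; ring,
          Real.rpow_add_one hm.ne']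
        change _ = ENNReal.ofReal (_ * _ * maxIntervalDensity E ^ _)
        ring_nf
end

section
/- Let $H$ be a Hilbert space, $Y$ a normed space, and $T:H\to Y$ a bounded linear operator with operator norm $\mathbf{C}=\|T\|>0$. Suppose $f=g+h$ with $g\perp h$ in $H$, $g\neq 0$, and $\|Tf\|_Y\geq(1-\delta)\mathbf{C}\|f\|_H$ for some $\delta\in(0,1/4]$. Then there exists a universal constant $C<\infty$ (independent of $f,g,h,T$) such that $\frac{\|h\|_H}{\|f\|_H}\leq C\max\left(\frac{\|Th\|_Y}{\mathbf{C}\|h\|_H},\,\delta^{1/2}\right)$ whenever $h\neq 0$. -/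
open scoped InnerProductSpace

private lemma stmt_12_aux (F s b e r : ℝ) (hF : 0 < F) (hs : 0 < s) (hb : 0 < b)
    (he : 0 ≤ e) (hr0 : 0 < r)
    (hf2 : F ^ 2 = s ^ 2 + b ^ 2)
    (h2 : (1 - r ^ 2) * F ≤ s + e * b) :
    b / F ≤ 3 * max e r := by
  set M : ℝ := max e r with hM
  have hMε : e ≤ M := le_max_left _ _
  have hMr : r ≤ M := le_max_right _ _
  have hM0 : 0 < M := lt_of_lt_of_le hr0 hMr
  have hbF : b ≤ F := by nlinarith
  have h5 : 0 < 2 * F ^ 2 - b ^ 2 + 2 * F * s := by nlinarith [mul_pos hF hs]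
  have hkey : 2 * F * s ≤ 2 * F ^ 2 - b ^ 2 := by
    nlinarith [h5, sq_nonneg (b ^ 2)]
  have hA : b ^ 2 ≤ 2 * r ^ 2 * F ^ 2 + 2 * e * b * F := by
    have h6 := mul_le_mul_of_nonneg_left h2 (by positivity : (0:ℝ) ≤ 2 * F)
    nlinarith [h6, hkey]
  have hδM : r ^ 2 * F ^ 2 ≤ M ^ 2 * F ^ 2 := by
    nlinarith [sq_nonneg F, mul_self_le_mul_self hr0.le hMr]
  have hεM : e * b * F ≤ M * b * F := by
    nlinarith [mul_le_mul_of_nonneg_right hMε (mul_nonneg hb.le hF.le)]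
  have hquad : b ^ 2 ≤ 2 * M ^ 2 * F ^ 2 + 2 * M * b * F := by linarith
  rw [div_le_iff₀ hF]
  nlinarith [sq_nonneg (b - 3 * M * F), mul_pos hM0 hF, mul_pos hM0 (mul_pos hM0 hF)]

/-- Near-extremizers of a bounded operator from a Hilbert space: if `f = g + h`
with `g ⊥ h`, `g ≠ 0`, and `f` is `δ`-nearly extremal, then `‖h‖/‖f‖` is
controlled by `max(‖Th‖/(‖T‖‖h‖), δ^{1/2})`, with a universal constant. -/
theorem stmt_12 :
    ∃ C : ℝ, 0 < C ∧
      ∀ (H Y : Type) [NormedAddCommGroup H] [InnerProductSpace ℝ H]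
        [NormedAddCommGroup Y] [NormedSpace ℝ Y]
        (T : H →L[ℝ] Y) (_ : 0 < ‖T‖)
        (f g h : H) (δ : ℝ),
        f = g + h → ⟪g, h⟫_ℝ = 0 → g ≠ 0 → h ≠ 0 →
        δ ∈ Set.Ioc (0 : ℝ) (1 / 4) →
        (1 - δ) * ‖T‖ * ‖f‖ ≤ ‖T f‖ →
        ‖h‖ / ‖f‖ ≤ C * max (‖T h‖ / (‖T‖ * ‖h‖)) (δ ^ (1 / 2 : ℝ)) := by
  refine ⟨3, by norm_num, ?_⟩
  intro H Y _ _ _ _ T hT f g h δ hfgh horth hg hh hδ hext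
  obtain ⟨hδ0, hδ4⟩ := hδ
  have hb : (0:ℝ) < ‖h‖ := norm_pos_iff.mpr hh
  have ha : (0:ℝ) < ‖g‖ := norm_pos_iff.mpr hg
  have hf2 : ‖f‖ ^ 2 = ‖g‖ ^ 2 + ‖h‖ ^ 2 := by
    rw [hfgh, @norm_add_sq_real, horth]; ring
  have hf : (0:ℝ) < ‖f‖ := by nlinarith [norm_nonneg f]
  have hε0 : 0 ≤ ‖T h‖ / (‖T‖ * ‖h‖) := div_nonneg (norm_nonneg _) (by positivity)
  have hεh : ‖T h‖ / (‖T‖ * ‖h‖) * (‖T‖ * ‖h‖) = ‖T h‖ := by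
    field_simp
  have h1 : ‖T f‖ ≤ ‖T‖ * ‖g‖ + ‖T h‖ / (‖T‖ * ‖h‖) * (‖T‖ * ‖h‖) := by
    calc ‖T f‖ = ‖T g + T h‖ := by rw [hfgh, map_add]
    _ ≤ ‖T g‖ + ‖T h‖ := norm_add_le _ _
    _ ≤ _ := by
        have := T.le_opNorm g
        rw [hεh]; linarith
  have h2 : (1 - δ) * ‖f‖ ≤ ‖g‖ + ‖T h‖ / (‖T‖ * ‖h‖) * ‖h‖ := by
    have h3 := hext.trans h1
    have h4 : ‖T‖ * ((1 - δ) * ‖f‖) ≤ ‖T‖ * (‖g‖ + ‖T h‖ / (‖T‖ * ‖h‖) * ‖h‖) := by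
      nlinarith
    exact le_of_mul_le_mul_left h4 hT
  have hr2 : Real.sqrt δ ^ 2 = δ := Real.sq_sqrt hδ0.le
  have hr0 : 0 < Real.sqrt δ := Real.sqrt_pos.mpr hδ0
  have hrw : δ ^ (1 / 2 : ℝ) = Real.sqrt δ := (Real.sqrt_eq_rpow δ).symm
  rw [hrw]
  exact stmt_12_aux ‖f‖ ‖g‖ ‖h‖ _ _ hf ha hb hε0 hr0 hf2 (by rw [hr2]; exact h2)
end

section
/- There exists a constant $C<\infty$ such that for all $s\in[1/2,1]$ and all $t\in\mathbb{R}$, $\int_{\mathbb{R}^2}\frac{dx_1\,dx_2}{\left(1-s^2x_1^2+(x_1+t)^2+x_2^2\right)^2+4s^2x_1^2} \leq C$. -/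
/-!
Write `m = s|x₁|`, `a = x₁ + t` and `r = √(a² + x₂²)`. The denominator factors as
`(1 + (r - m)²)(1 + (r + m)²) ≥ (1 + (r - m)²)(Q + x₂²)` with `Q = 1 + m² + a²`, so for every
`δ > 0` it is at least `δ²(Q + x₂²)` off the ridge `|r - m| < δ` and at least `Q` on it, while the
ridge meets each line `x₁ = const` in a set of measure `O(√(δ(m + δ)))`. Taking `δ = Q^{1/4}`
bounds the inner integral by `10 Q^{-5/8} ≲ (1 + x₁²/4)^{-5/8}`, uniformly in `s ≥ 1/2` and `t`,
and this is integrable in `x₁`.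
-/

open MeasureTheory ENNReal Real

lemma lintegral_ofReal_inv_add_sq {Q : ℝ} (hQ : 0 < Q) :
    ∫⁻ y : ℝ, ENNReal.ofReal ((Q + y ^ 2)⁻¹) = ENNReal.ofReal (π / √Q) := by
  have hsqrt : 0 < √Q := Real.sqrt_pos.2 hQ
  have hscale : ∀ y : ℝ, (Q + y ^ 2)⁻¹ = Q⁻¹ * (1 + (y / √Q) ^ 2)⁻¹ := fun y => by
    rw [div_pow, Real.sq_sqrt hQ.le]; field_simp
  simp_rw [hscale]
  rw [← ofReal_integral_eq_lintegral_ofReal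
      ((integrable_inv_one_add_sq.comp_div hsqrt.ne').const_mul _)
      (ae_of_all _ fun y => by positivity),
    integral_const_mul, Measure.integral_comp_div (fun y => (1 + y ^ 2)⁻¹),
    integral_univ_inv_one_add_sq, smul_eq_mul, abs_of_pos hsqrt]
  congr 1
  rw [show Q⁻¹ = (√Q ^ 2)⁻¹ by rw [Real.sq_sqrt hQ.le]]
  field_simp

lemma sqrt_le_sqrt_sub_add_sqrt (c : ℝ) {w : ℝ} (hw : 0 ≤ w) :
    √(c + w) ≤ √(c - w) + √(2 * w) := by
  have hα : c - w ≤ √(c - w) ^ 2 := by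
    rcases le_total 0 (c - w) with h | h
    · rw [Real.sq_sqrt h]
    · exact h.trans (sq_nonneg _)
  rw [Real.sqrt_le_left (by positivity)]
  nlinarith [Real.sq_sqrt (by positivity : (0:ℝ) ≤ 2 * w),
    mul_nonneg (Real.sqrt_nonneg (c - w)) (Real.sqrt_nonneg (2 * w))]

lemma volume_abs_sq_sub_lt_le (c w : ℝ) :
    volume {y : ℝ | |y ^ 2 - c| < w} ≤ ENNReal.ofReal (2 * √(2 * w)) := by
  rcases lt_or_ge w 0 with hw | hw
  · have : {y : ℝ | |y ^ 2 - c| < w} = ∅ :=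
      Set.eq_empty_of_forall_notMem fun y hy => (abs_nonneg _).not_gt (hy.trans hw)
    simp [this]
  set α := √(c - w)
  set β := √(c + w)
  have hsub : {y : ℝ | |y ^ 2 - c| < w} ⊆ Set.Icc α β ∪ Set.Icc (-β) (-α) := by
    intro y (hy : |y ^ 2 - c| < w)
    obtain ⟨hlo, hhi⟩ := abs_lt.1 hy
    have hα : α ≤ |y| := by
      rw [← Real.sqrt_sq_eq_abs]; exact Real.sqrt_le_sqrt (by linarith)
    have hβ : |y| ≤ β := by
      rw [← Real.sqrt_sq_eq_abs]; exact Real.sqrt_le_sqrt (by linarith)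
    rcases le_total 0 y with h | h
    · rw [abs_of_nonneg h] at hα hβ; exact Or.inl ⟨hα, hβ⟩
    · rw [abs_of_nonpos h] at hα hβ; exact Or.inr ⟨by linarith, by linarith⟩
  calc volume {y : ℝ | |y ^ 2 - c| < w}
      ≤ volume (Set.Icc α β) + volume (Set.Icc (-β) (-α)) :=
        (measure_mono hsub).trans (measure_union_le _ _)
    _ = ENNReal.ofReal (2 * (β - α)) := by
        have hαβ : 0 ≤ β - α := sub_nonneg.2 (Real.sqrt_le_sqrt (by linarith))
        rw [Real.volume_Icc, Real.volume_Icc, neg_sub_neg, two_mul,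
          ENNReal.ofReal_add hαβ hαβ]
    _ ≤ ENNReal.ofReal (2 * √(2 * w)) := by
        gcongr; linarith [sqrt_le_sqrt_sub_add_sqrt c hw]

lemma mul_one_add_sq_le {m r : ℝ} (hm : 0 ≤ m) (hr : 0 ≤ r) :
    (1 + (r - m) ^ 2) * (1 + m ^ 2 + r ^ 2) ≤ (1 - m ^ 2 + r ^ 2) ^ 2 + 4 * m ^ 2 := by
  nlinarith [mul_nonneg (mul_nonneg hm hr) (add_nonneg zero_le_one (sq_nonneg (r - m)))]

lemma abs_sq_sub_sq_lt {m r δ : ℝ} (hm : 0 ≤ m) (h : |r - m| < δ) :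
    |r ^ 2 - m ^ 2| < δ * (2 * m + δ) := by
  obtain ⟨h₁, h₂⟩ := abs_lt.1 h
  rw [abs_lt]
  constructor <;> nlinarith

lemma ofReal_inv_le_ridge_indicator_add {m δ : ℝ} (hm : 0 ≤ m) (hδ : 0 < δ) (a y : ℝ) :
    ENNReal.ofReal (((1 - m ^ 2 + a ^ 2 + y ^ 2) ^ 2 + 4 * m ^ 2)⁻¹)
      ≤ {y : ℝ | |y ^ 2 - (m ^ 2 - a ^ 2)| < δ * (2 * m + δ)}.indicator
          (fun _ => ENNReal.ofReal (1 + m ^ 2 + a ^ 2)⁻¹) y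
        + ENNReal.ofReal ((δ ^ 2 * (1 + m ^ 2 + a ^ 2 + y ^ 2))⁻¹) := by
  set r := √(a ^ 2 + y ^ 2)
  have hr : 0 ≤ r := Real.sqrt_nonneg _
  have hr2 : r ^ 2 = a ^ 2 + y ^ 2 := Real.sq_sqrt (by positivity)
  have hD := mul_one_add_sq_le hm hr
  rw [hr2, ← add_assoc (1 - m ^ 2), ← add_assoc (1 + m ^ 2)] at hD
  by_cases hy : y ∈ {y : ℝ | |y ^ 2 - (m ^ 2 - a ^ 2)| < δ * (2 * m + δ)}
  · rw [Set.indicator_of_mem hy]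
    refine le_add_right (ENNReal.ofReal_le_ofReal (inv_anti₀ (by positivity) ?_))
    nlinarith [sq_nonneg (r - m), sq_nonneg y]
  · rw [Set.indicator_of_notMem hy, zero_add]
    have hfar : δ ≤ |r - m| := by
      by_contra! h
      exact hy (by simpa [hr2, sub_sub_eq_add_sub, add_comm] using abs_sq_sub_sq_lt hm h)
    refine ENNReal.ofReal_le_ofReal (inv_anti₀ (by positivity) (hD.trans' ?_))
    have : δ ^ 2 ≤ (r - m) ^ 2 := by
      rw [← sq_abs (r - m)]; exact pow_le_pow_left₀ hδ.le hfar 2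
    nlinarith [sq_nonneg y, sq_nonneg a, sq_nonneg m]

lemma lintegral_ofReal_inv_le_ridge {m δ : ℝ} (hm : 0 ≤ m) (hδ : 0 < δ) (a : ℝ) :
    ∫⁻ y : ℝ, ENNReal.ofReal (((1 - m ^ 2 + a ^ 2 + y ^ 2) ^ 2 + 4 * m ^ 2)⁻¹)
      ≤ ENNReal.ofReal (2 * √(2 * (δ * (2 * m + δ))) / (1 + m ^ 2 + a ^ 2)
          + π / (δ ^ 2 * √(1 + m ^ 2 + a ^ 2))) := by
  set Q := 1 + m ^ 2 + a ^ 2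
  have hQ : 0 < Q := by positivity
  set T := {y : ℝ | |y ^ 2 - (m ^ 2 - a ^ 2)| < δ * (2 * m + δ)}
  have hT : MeasurableSet T := measurableSet_lt (by fun_prop) measurable_const
  have hsplit : ∀ y : ℝ, ENNReal.ofReal ((δ ^ 2 * (Q + y ^ 2))⁻¹)
      = ENNReal.ofReal (δ ^ 2)⁻¹ * ENNReal.ofReal ((Q + y ^ 2)⁻¹) := fun y => by
    rw [mul_inv, ENNReal.ofReal_mul (by positivity)]
  calc ∫⁻ y : ℝ, ENNReal.ofReal (((1 - m ^ 2 + a ^ 2 + y ^ 2) ^ 2 + 4 * m ^ 2)⁻¹)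
      ≤ ∫⁻ y : ℝ, (T.indicator (fun _ => ENNReal.ofReal Q⁻¹) y
          + ENNReal.ofReal ((δ ^ 2 * (Q + y ^ 2))⁻¹)) :=
        lintegral_mono fun y => ofReal_inv_le_ridge_indicator_add hm hδ a y
    _ = ENNReal.ofReal Q⁻¹ * volume T
          + ENNReal.ofReal (δ ^ 2)⁻¹ * ∫⁻ y : ℝ, ENNReal.ofReal ((Q + y ^ 2)⁻¹) := by
        simp_rw [hsplit]
        rw [lintegral_add_left (measurable_const.indicator hT), lintegral_indicator_const hT,
          lintegral_const_mul _ (by fun_prop)]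
    _ ≤ ENNReal.ofReal Q⁻¹ * ENNReal.ofReal (2 * √(2 * (δ * (2 * m + δ))))
          + ENNReal.ofReal (δ ^ 2)⁻¹ * ENNReal.ofReal (π / √Q) := by
        rw [lintegral_ofReal_inv_add_sq hQ]
        gcongr
        exact volume_abs_sq_sub_lt_le _ _
    _ = _ := by
        rw [← ENNReal.ofReal_mul (by positivity), ← ENNReal.ofReal_mul (by positivity),
          ← ENNReal.ofReal_add (by positivity) (by positivity)]
        congr 1
        field_simp

-- `δ = η²` with `η = Q^{1/8}`, parametrized so that all exponents stay integral.
lemma ridge_bound_le {m a η : ℝ} (hm : 0 ≤ m) (hη : 1 ≤ η) (hQ : 1 + m ^ 2 + a ^ 2 = η ^ 8) :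
    2 * √(2 * (η ^ 2 * (2 * m + η ^ 2))) / (1 + m ^ 2 + a ^ 2)
      + π / ((η ^ 2) ^ 2 * √(1 + m ^ 2 + a ^ 2)) ≤ 10 / η ^ 5 := by
  have hη0 : 0 < η := by linarith
  have hsqrtQ : √(η ^ 8) = η ^ 4 := by
    rw [show η ^ 8 = (η ^ 4) ^ 2 by ring, Real.sqrt_sq (by positivity)]
  have hm4 : m ≤ η ^ 4 := by
    refine (pow_le_pow_iff_left₀ hm (by positivity) two_ne_zero).1 ?_
    nlinarith [sq_nonneg a]
  have hη24 : η ^ 2 ≤ η ^ 4 := pow_le_pow_right₀ hη (by norm_num)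
  have hwidth : √(2 * (η ^ 2 * (2 * m + η ^ 2))) ≤ 3 * η ^ 3 := by
    rw [Real.sqrt_le_left (by positivity)]
    nlinarith [pow_pos hη0 2]
  have hη58 : η ^ 5 ≤ η ^ 8 := pow_le_pow_right₀ hη (by norm_num)
  rw [hQ, hsqrtQ]
  calc 2 * √(2 * (η ^ 2 * (2 * m + η ^ 2))) / η ^ 8 + π / ((η ^ 2) ^ 2 * η ^ 4)
      ≤ 2 * (3 * η ^ 3) / η ^ 8 + 4 / η ^ 5 := by
        gcongr
        · exact pi_le_four
        · rw [← pow_mul, ← pow_add]; exact hη58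
    _ = 10 / η ^ 5 := by field_simp; ring

lemma inv_pow_five_le_rpow {P η : ℝ} (hP : 0 < P) (hη : 0 ≤ η) (h : P ≤ η ^ 8) :
    (η ^ 5)⁻¹ ≤ P ^ (-(5 / 4 : ℝ) / 2) :=
  calc (η ^ 5)⁻¹ = (η ^ 8) ^ (-(5 / 4 : ℝ) / 2) := by
        rw [← Real.rpow_natCast, ← Real.rpow_natCast, ← Real.rpow_mul hη,
          show ((8 : ℕ) : ℝ) * (-(5 / 4) / 2) = -(5 : ℕ) by norm_num, Real.rpow_neg hη]
    _ ≤ P ^ (-(5 / 4 : ℝ) / 2) := Real.rpow_le_rpow_of_nonpos hP h (by norm_num)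

lemma lintegral_slice_le {s : ℝ} (hs : 1 / 2 ≤ s) (t x₁ : ℝ) :
    ∫⁻ x₂ : ℝ, ENNReal.ofReal
        (((1 - s ^ 2 * x₁ ^ 2 + (x₁ + t) ^ 2 + x₂ ^ 2) ^ 2 + 4 * s ^ 2 * x₁ ^ 2)⁻¹)
      ≤ ENNReal.ofReal (10 * (1 + (x₁ / 2) ^ 2) ^ (-(5 / 4 : ℝ) / 2)) := by
  set m := s * |x₁|
  have hm : 0 ≤ m := mul_nonneg (by linarith) (abs_nonneg x₁)
  have hm2 : m ^ 2 = s ^ 2 * x₁ ^ 2 := by rw [mul_pow, sq_abs]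
  set Q := 1 + m ^ 2 + (x₁ + t) ^ 2
  have hQ : 1 ≤ Q := by nlinarith [sq_nonneg m, sq_nonneg (x₁ + t)]
  set η := Q ^ (8⁻¹ : ℝ)
  have hη : 1 ≤ η := Real.one_le_rpow hQ (by norm_num)
  have hηQ : Q = η ^ 8 := by
    exact_mod_cast (Real.rpow_inv_natCast_pow (n := 8) (by linarith) (by norm_num)).symm
  have hPQ : 1 + (x₁ / 2) ^ 2 ≤ η ^ 8 := by
    rw [← hηQ]
    nlinarith [sq_nonneg (x₁ + t), mul_le_mul_of_nonneg_right (by nlinarith : 1 / 4 ≤ s ^ 2)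
      (sq_nonneg x₁)]
  calc ∫⁻ x₂ : ℝ, ENNReal.ofReal
        (((1 - s ^ 2 * x₁ ^ 2 + (x₁ + t) ^ 2 + x₂ ^ 2) ^ 2 + 4 * s ^ 2 * x₁ ^ 2)⁻¹)
      = ∫⁻ x₂ : ℝ, ENNReal.ofReal
          (((1 - m ^ 2 + (x₁ + t) ^ 2 + x₂ ^ 2) ^ 2 + 4 * m ^ 2)⁻¹) := by
        rw [hm2, mul_assoc 4]
    _ ≤ ENNReal.ofReal (2 * √(2 * (η ^ 2 * (2 * m + η ^ 2))) / Q + π / ((η ^ 2) ^ 2 * √Q)) :=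
        lintegral_ofReal_inv_le_ridge hm (by positivity) _
    _ ≤ ENNReal.ofReal (10 / η ^ 5) := ENNReal.ofReal_le_ofReal (ridge_bound_le hm hη hηQ)
    _ ≤ ENNReal.ofReal (10 * (1 + (x₁ / 2) ^ 2) ^ (-(5 / 4 : ℝ) / 2)) := by
        rw [div_eq_mul_inv]
        gcongr
        exact inv_pow_five_le_rpow (by positivity) (by positivity) hPQ

/-- Uniform bound on the two-dimensional integral arising from Lorentz boosts
of the extremizer: for `s ∈ [1/2,1]` and all `t`, the integral is `≤ C`. -/
theorem stmt_16 :
    ∃ C : ℝ, 0 < C ∧ ∀ s ∈ Set.Icc (1/2 : ℝ) 1, ∀ t : ℝ,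
      ∫⁻ x : ℝ × ℝ,
        ENNReal.ofReal
          (((1 - s ^ 2 * x.1 ^ 2 + (x.1 + t) ^ 2 + x.2 ^ 2) ^ 2
            + 4 * s ^ 2 * x.1 ^ 2)⁻¹) ≤ ENNReal.ofReal C := by
  set g : ℝ → ℝ := fun x => 10 * (1 + (x / 2) ^ 2) ^ (-(5 / 4 : ℝ) / 2)
  have hg : Integrable g := by
    have := (integrable_rpow_neg_one_add_norm_sq (E := ℝ) (μ := volume) (r := 5 / 4)
      (by norm_num)).comp_div (two_ne_zero (α := ℝ))
    simpa only [Real.norm_eq_abs, sq_abs] using this.const_mul 10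
  have hg0 : 0 ≤ g := fun x => by positivity
  have hint : 0 ≤ ∫ x, g x := integral_nonneg hg0
  refine ⟨(∫ x, g x) + 1, by linarith, ?_⟩
  rintro s ⟨hs, -⟩ t
  calc ∫⁻ x : ℝ × ℝ, ENNReal.ofReal
        (((1 - s ^ 2 * x.1 ^ 2 + (x.1 + t) ^ 2 + x.2 ^ 2) ^ 2 + 4 * s ^ 2 * x.1 ^ 2)⁻¹)
      = ∫⁻ x₁ : ℝ, ∫⁻ x₂ : ℝ, ENNReal.ofReal
          (((1 - s ^ 2 * x₁ ^ 2 + (x₁ + t) ^ 2 + x₂ ^ 2) ^ 2 + 4 * s ^ 2 * x₁ ^ 2)⁻¹) := by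
        rw [Measure.volume_eq_prod, lintegral_prod _ (by fun_prop)]
    _ ≤ ∫⁻ x₁ : ℝ, ENNReal.ofReal (g x₁) := lintegral_mono fun x₁ => lintegral_slice_le hs t x₁
    _ = ENNReal.ofReal (∫ x, g x) := (ofReal_integral_eq_lintegral_ofReal hg (ae_of_all _ hg0)).symm
    _ ≤ ENNReal.ofReal ((∫ x, g x) + 1) := ENNReal.ofReal_le_ofReal (by linarith)
end
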